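/- arXiv:1106.6254 — 2 statements merged into one kernel-verified Lean document; each statement's English description precedes it below -/
import Mathlib

section
/- Let C be a (V1;k)-bineighborly polytopal d-complex with k ≥ 2. Then C is (k−1)-neighborly, i.e., every subset of at most k−1 vertices of C is the vertex set of a face of C. -/
open Set Pointwise

noncomputable section

/-- Euclidean `d`-space `E^d`, modeled as `Fin d → ℝ`. -/
abbrev Euc (d : ℕ) : Type := Fin d → ℝ

/-- The (affine) dimension of a subset of Euclidean space: the dimension of its affine hull. -/
def setDim {d : ℕ} (F : Set (Euc d)) : ℕ :=
  Module.finrank ℝ (affineSpan ℝ F).direction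

/-- A (convex) polytope: the convex hull of a finite point set. -/
def IsPolytope {d : ℕ} (P : Set (Euc d)) : Prop :=
  ∃ S : Set (Euc d), S.Finite ∧ P = convexHull ℝ S

/-- `F` is a proper (nonempty) face of `P`: `F` is an exposed face of `P` (the intersection
of `P` with a supporting hyperplane) which is nonempty and different from `P` itself. -/
def IsProperFaceOf {d : ℕ} (P F : Set (Euc d)) : Prop :=
  IsExposed ℝ P F ∧ F ≠ P ∧ F.Nonempty

/-- The vertex set of a polytope: its set of extreme points. -/
def vertSet {d : ℕ} (P : Set (Euc d)) : Set (Euc d) :=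
  Set.extremePoints ℝ P

/-- The number of vertices of a polytope. -/
def vertCount {d : ℕ} (P : Set (Euc d)) : ℕ := (vertSet P).ncard

/-- `faceCount P k` is `f_k(P)`, the number of `k`-dimensional (proper) faces of `P`. -/
def faceCount {d : ℕ} (P : Set (Euc d)) (k : ℕ) : ℕ :=
  {F : Set (Euc d) | IsProperFaceOf P F ∧ setDim F = k}.ncard

/-- The moment curve `t ↦ (t, t², …, t^δ)` in `E^δ`. -/
def momentCurve (δ : ℕ) (t : ℝ) : Euc δ := fun i => t ^ ((i : ℕ) + 1)

/-- A standard realization of the cyclic `δ`-polytope `C_δ(n)` with `n` vertices: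
the convex hull of `n` distinct points on the moment curve. -/
def cyclicPolytope (δ n : ℕ) : Set (Euc δ) :=
  convexHull ℝ (momentCurve δ '' (Set.range fun j : Fin n => (j : ℝ) + 1))

/-- `S` is the vertex set of a proper face of `P` of dimension `|S| - 1`. -/
def IsSimplexFaceVertexSet {d : ℕ} (P S : Set (Euc d)) : Prop :=
  ∃ F : Set (Euc d), IsProperFaceOf P F ∧ vertSet F = S ∧ setDim F + 1 = S.ncard

/-- A polytope `P` is `(V1; k)`-bineighborly: `V1` is a nonempty proper subset of the vertex
set of `P`, and for all nonempty `S1 ⊆ V1` and `S2 ⊆ V ∖ V1` with `|S1| + |S2| ≤ k`,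
the set `S1 ∪ S2` is the vertex set of a face of `P` of dimension `|S1| + |S2| - 1`. -/
def PolytopeBineighborly {d : ℕ} (P V1 : Set (Euc d)) (k : ℕ) : Prop :=
  V1.Nonempty ∧ V1 ⊂ vertSet P ∧
    ∀ S1 S2 : Set (Euc d), S1.Nonempty → S2.Nonempty →
      S1 ⊆ V1 → S2 ⊆ vertSet P \ V1 → S1.ncard + S2.ncard ≤ k →
        IsSimplexFaceVertexSet P (S1 ∪ S2)

/-- A polytope is `k`-neighborly if every nonempty subset of at most `k` of its vertices is
the vertex set of a face. -/
def PolytopeNeighborly {d : ℕ} (P : Set (Euc d)) (k : ℕ) : Prop :=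
  ∀ S : Set (Euc d), S ⊆ vertSet P → S.Nonempty → S.ncard ≤ k →
    ∃ F : Set (Euc d), IsProperFaceOf P F ∧ vertSet F = S

/-- Embed `E^d` into the hyperplane `{x_{d+1} = c}` of `E^{d+1}`. -/
def lift {d : ℕ} (c : ℝ) (x : Euc d) : Euc (d + 1) := Fin.snoc x c

/-- The Cayley polytope `CH_{d+1}({P1, P2})` of `P1` embedded in `{x_{d+1} = 0}` and
`P2` embedded in `{x_{d+1} = 1}`. -/
def cayley {d : ℕ} (P1 P2 : Set (Euc d)) : Set (Euc (d + 1)) :=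
  convexHull ℝ (lift 0 '' P1 ∪ lift 1 '' P2)

/-- `ubTerm n d k = binom (n - d - 2 + k) k` (equal to the true binomial for `n ≥ d + 1`). -/
def ubTerm (n d k : ℕ) : ℕ := (n + k - (d + 2)).choose k

/-- The upper bound for `f_{k-1}(P1 ⊕ P2)`:
`f_k(C_{d+1}(n1+n2)) - ∑_{i=0}^{⌊(d+1)/2⌋} binom(d+1-i, k+1-i) (binom(n1-d-2+i, i) + binom(n2-d-2+i, i))`. -/
def minkBound (d n1 n2 k : ℕ) : ℤ :=
  (faceCount (cyclicPolytope (d + 1) (n1 + n2)) k : ℤ)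
    - ∑ i ∈ Finset.range ((d + 1) / 2 + 1),
        (if i ≤ k + 1 then ((d + 1 - i).choose (k + 1 - i) : ℤ) else 0)
          * ((ubTerm n1 d i : ℤ) + (ubTerm n2 d i : ℤ))

/-- A polytopal complex in `E^N`: a finite nonempty collection of polytopes containing `∅`,
closed under taking faces, such that pairwise intersections are faces of both. -/
structure PolyComplex (N : ℕ) where
  faces : Set (Set (Euc N))
  finite_faces : faces.Finite
  empty_mem : ∅ ∈ faces
  polytope_mem : ∀ F ∈ faces, IsPolytope F
  down_closed : ∀ F ∈ faces, ∀ G : Set (Euc N), IsExposed ℝ F G → G ∈ faces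
  inter_face : ∀ F ∈ faces, ∀ G ∈ faces, IsExposed ℝ F (F ∩ G) ∧ IsExposed ℝ G (F ∩ G)

namespace PolyComplex

/-- The vertex set of a complex: its `0`-dimensional faces. -/
def verts {N : ℕ} (C : PolyComplex N) : Set (Euc N) := {v : Euc N | {v} ∈ C.faces}

/-- `C` is a (pure-dimension-bounded) `d`-complex: all faces have dimension at most `d`
and some face has dimension exactly `d`. -/
def IsDComplex {N : ℕ} (C : PolyComplex N) (d : ℕ) : Prop :=
  (∀ F ∈ C.faces, setDim F ≤ d) ∧ ∃ F ∈ C.faces, setDim F = d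

/-- A complex `C` is `(V1; k)`-bineighborly. -/
def Bineighborly {N : ℕ} (C : PolyComplex N) (V1 : Set (Euc N)) (k : ℕ) : Prop :=
  V1.Nonempty ∧ V1 ⊂ C.verts ∧
    ∀ S1 S2 : Set (Euc N), S1.Nonempty → S2.Nonempty →
      S1 ⊆ V1 → S2 ⊆ C.verts \ V1 → S1.ncard + S2.ncard ≤ k →
        ∃ F ∈ C.faces, vertSet F = S1 ∪ S2 ∧ setDim F + 1 = S1.ncard + S2.ncard

/-- A complex is `k`-neighborly if every nonempty subset of at most `k` of its vertices is
the vertex set of a face. -/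
def Neighborly {N : ℕ} (C : PolyComplex N) (k : ℕ) : Prop :=
  ∀ S : Set (Euc N), S ⊆ C.verts → S.Nonempty → S.ncard ≤ k →
    ∃ F ∈ C.faces, vertSet F = S

end PolyComplex

/-- `F` is a simplex: the convex hull of an affinely independent finite point set. -/
def IsSimplexSet {d : ℕ} (F : Set (Euc d)) : Prop :=
  ∃ S : Finset (Euc d),
    AffineIndependent ℝ (fun v : {x // x ∈ S} => (v : Euc d)) ∧
      F = convexHull ℝ (S : Set (Euc d))

/-- A simplicial polytope: all its proper faces are simplices. -/
def IsSimplicialPolytope {d : ℕ} (P : Set (Euc d)) : Prop :=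
  IsPolytope P ∧ ∀ F : Set (Euc d), IsProperFaceOf P F → IsSimplexSet F

/-- The collection `𝓕` of proper faces of the Cayley polytope of `P1`, `P2` having at least one
vertex in (the embedded copy of) each of `P1` and `P2`. -/
def cayleyFaces {d : ℕ} (P1 P2 : Set (Euc d)) : Set (Set (Euc (d + 1))) :=
  {F : Set (Euc (d + 1)) | IsProperFaceOf (cayley P1 P2) F ∧
    (vertSet F ∩ lift 0 '' P1).Nonempty ∧ (vertSet F ∩ lift 1 '' P2).Nonempty}

/-- `fFm1 P1 P2 k = f_{k-1}(𝓕)`, with the convention `f_{-1}(𝓕) = -1`. -/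
def fFm1 {d : ℕ} (P1 P2 : Set (Euc d)) : ℕ → ℤ
  | 0 => -1
  | (k + 1) => (({F ∈ cayleyFaces P1 P2 | setDim F = k} : Set (Set (Euc (d + 1)))).ncard : ℤ)

/-- The `h`-vector of `𝓕`: `h_k(𝓕) = ∑_{i=0}^{k} (-1)^{k-i} binom(d+1-i, d+1-k) f_{i-1}(𝓕)`. -/
def hF {d : ℕ} (P1 P2 : Set (Euc d)) (k : ℕ) : ℤ :=
  ∑ i ∈ Finset.range (k + 1),
    (-1 : ℤ) ^ (k - i) * ((d + 1 - i).choose (d + 1 - k) : ℤ) * fFm1 P1 P2 i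

/-- `fBdm1 P k = f_{k-1}(∂P)`, with `f_{-1}(∂P) = 1`. -/
def fBdm1 {d : ℕ} (P : Set (Euc d)) : ℕ → ℤ
  | 0 => 1
  | (k + 1) => (faceCount P k : ℤ)

/-- The `h`-vector of the boundary complex of a `d`-polytope `P ⊆ E^d`:
`h_k(∂P) = ∑_{i=0}^{k} (-1)^{k-i} binom(d-i, d-k) f_{i-1}(∂P)`. -/
def hBd {d : ℕ} (P : Set (Euc d)) (k : ℕ) : ℤ :=
  ∑ i ∈ Finset.range (k + 1),
    (-1 : ℤ) ^ (k - i) * ((d - i).choose (d - k) : ℤ) * fBdm1 P i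

/-- The `g`-vector of `∂P`: `g_0 = h_0 (= 1)` and `g_k = h_k - h_{k-1}`, with the
convention `h_{d+1}(∂P) = 0`. -/
def gBd {d : ℕ} (P : Set (Euc d)) (k : ℕ) : ℤ :=
  (if k ≤ d then hBd P k else 0)
    - (if k = 0 then 0 else if k - 1 ≤ d then hBd P (k - 1) else 0)

/-- `fCycm1 δ n k = f_{k-1}(C_δ(n))`, with `f_{-1} = 1`. -/
def fCycm1 (δ n k : ℕ) : ℤ :=
  if k = 0 then 1 else (faceCount (cyclicPolytope δ n) (k - 1) : ℤ)

/-- The upper bound for `f_{k-1}(𝓕)`: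
`f_{k-1}(C_{d+1}(n1+n2)) - ∑_{i=0}^{⌊(d+1)/2⌋} binom(d+1-i, k-i)(binom(n1-d-2+i,i)+binom(n2-d-2+i,i))`. -/
def cayleyBound (d n1 n2 k : ℕ) : ℤ :=
  fCycm1 (d + 1) (n1 + n2) k
    - ∑ i ∈ Finset.range ((d + 1) / 2 + 1),
        (if i ≤ k then ((d + 1 - i).choose (k - i) : ℤ) else 0)
          * ((ubTerm n1 d i : ℤ) + (ubTerm n2 d i : ℤ))

/-- The moment-like curve `γ1(t; ζ) = (t, ζ t^d, t², t³, …, t^{d-1}, 0)` in `E^{d+1}`. -/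
def gamma1 (d : ℕ) (ζ t : ℝ) : Euc (d + 1) := fun i =>
  if (i : ℕ) = 0 then t
  else if (i : ℕ) = 1 then ζ * t ^ d
  else if (i : ℕ) = d then 0
  else t ^ (i : ℕ)

/-- The moment-like curve `γ2(s; ζ) = (ζ s^d, s, s², s³, …, s^{d-1}, 1)` in `E^{d+1}`. -/
def gamma2 (d : ℕ) (ζ s : ℝ) : Euc (d + 1) := fun i =>
  if (i : ℕ) = 0 then ζ * s ^ d
  else if (i : ℕ) = 1 then s
  else if (i : ℕ) = d then 1
  else s ^ (i : ℕ)

/-- The `(k+ℓ) × (k+ℓ)` matrix whose determinant is `D_{k,ℓ}(τ)`: rows are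
`(1,…,1,0,…,0)`, `(x₁τ,…,x_kτ,0,…,0)`, `(0,…,0,1,…,1)`, `(0,…,0,y₁,…,y_ℓ)` and
`(x₁^pτ^p,…,x_k^pτ^p,y₁^p,…,y_ℓ^p)` for `p = 2, …, k+ℓ-3`. -/
def Dmat (k l : ℕ) (x : Fin k → ℝ) (y : Fin l → ℝ) (τ : ℝ) :
    Matrix (Fin (k + l)) (Fin (k + l)) ℝ :=
  Matrix.of fun r c =>
    have hcl : (c : ℕ) < k + l := c.isLt
    if hc : (c : ℕ) < k then
      if (r : ℕ) = 0 then 1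
      else if (r : ℕ) = 1 then x ⟨(c : ℕ), hc⟩ * τ
      else if (r : ℕ) = 2 then 0
      else if (r : ℕ) = 3 then 0
      else (x ⟨(c : ℕ), hc⟩ * τ) ^ ((r : ℕ) - 2)
    else
      have hck : (c : ℕ) - k < l := by omega
      if (r : ℕ) = 0 then 0
      else if (r : ℕ) = 1 then 0
      else if (r : ℕ) = 2 then 1
      else if (r : ℕ) = 3 then y ⟨(c : ℕ) - k, hck⟩
      else y ⟨(c : ℕ) - k, hck⟩ ^ ((r : ℕ) - 2)

/-- The exponent vector `μ = (0, 1, k, k+1, …, k+ℓ-3)`. -/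
def muExp (k i : ℕ) : ℕ := if i = 0 then 0 else if i = 1 then 1 else k + i - 2

/-- The Vandermonde determinant `VD(x) = ∏_{i<j} (x_j - x_i)`. -/
def VDprod {k : ℕ} (x : Fin k → ℝ) : ℝ :=
  ∏ p ∈ Finset.univ.filter (fun p : Fin k × Fin k => p.1 < p.2), (x p.2 - x p.1)

/-- The generalized Vandermonde determinant `GVD(y; μ) = det (y_j^{μ_i})` with exponent
vector `μ = (0, 1, k, k+1, …, k+ℓ-3)`. -/
def GVDdet (k : ℕ) {l : ℕ} (y : Fin l → ℝ) : ℝ :=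
  (Matrix.of fun i j : Fin l => y j ^ muExp k (i : ℕ)).det

/-- `binom(a, b)` for an integer lower index, zero when `b < 0` or `b > a`. -/
def zchoose (a : ℕ) (b : ℤ) : ℝ := if 0 ≤ b then (a.choose b.toNat : ℝ) else 0

/-!
Given at most `k - 1` vertices, add one vertex from the side of the bipartition `V1 ⊔ V ∖ V1`
they miss (if any). Bineighborliness then yields a face whose dimension is one less than its
number of vertices, i.e. a simplex having the given vertices among its own. In a simplex
`conv s`, any `conv t` with `t ⊆ s` is exposed by the affine function that is `1` on `t` and `0`
on `s ∖ t` (a sum of barycentric coordinates), and the complex is closed under exposed faces.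
-/

section ExposedFaces

variable {E : Type*} [AddCommGroup E] [Module ℝ E] [TopologicalSpace E]

theorem mem_convexHull_of_mem_convexHull_union {B C : Set E} (l : E →L[ℝ] ℝ) {c : ℝ}
    (hB : ∀ x ∈ B, l x = c) (hC : ∀ x ∈ C, l x < c) {x : E}
    (hx : x ∈ convexHull ℝ (B ∪ C)) (hxc : c ≤ l x) : x ∈ convexHull ℝ B := by
  rcases B.eq_empty_or_nonempty with rfl | hBne
  · have := convexHull_min hC (convex_halfSpace_lt l.isLinear c) (by rwa [empty_union] at hx)
    exact absurd hxc (not_le.2 this)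
  rcases C.eq_empty_or_nonempty with rfl | hCne
  · rwa [union_empty] at hx
  rw [convexHull_union hBne hCne, mem_convexJoin] at hx
  obtain ⟨a, ha, b, hb, p, q, -, hq, hpq, rfl⟩ := hx
  have hla : l a = c := convexHull_min hB (convex_hyperplane l.isLinear c) ha
  have hlb : l b < c := convexHull_min hC (convex_halfSpace_lt l.isLinear c) hb
  obtain rfl : p = 1 - q := by linarith
  obtain rfl : q = 0 := by
    by_contra hq0
    have := mul_pos (hq.lt_of_ne' hq0) (sub_pos.2 hlb)
    simp only [map_add, map_smul, smul_eq_mul, hla] at hxc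
    linarith
  simpa using ha

theorem isExposed_convexHull_union {B C : Set E} (l : E →L[ℝ] ℝ) {c : ℝ}
    (hB : ∀ x ∈ B, l x = c) (hC : ∀ x ∈ C, l x < c) :
    IsExposed ℝ (convexHull ℝ (B ∪ C)) (convexHull ℝ B) := by
  rintro ⟨b, hb⟩
  have hle : ∀ y ∈ convexHull ℝ (B ∪ C), l y ≤ c :=
    convexHull_min (union_subset (fun y hy => (hB y hy).le) fun y hy => (hC y hy).le)
      (convex_halfSpace_le l.isLinear c)
  have hlb : l b = c := convexHull_min hB (convex_hyperplane l.isLinear c) hb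
  refine ⟨l, Subset.antisymm (fun x hx => ⟨convexHull_mono subset_union_left hx, fun y hy => ?_⟩)
    fun x ⟨hx, hmax⟩ => mem_convexHull_of_mem_convexHull_union l hB hC hx ?_⟩
  · rw [convexHull_min hB (convex_hyperplane l.isLinear c) hx]
    exact hle y hy
  · exact hlb ▸ hmax b (convexHull_mono subset_union_left hb)

end ExposedFaces

theorem AffineIndependent.exists_affineMap_eq_one_and_eq_zero {k V P : Type*} [DivisionRing k]
    [AddCommGroup V] [Module k V] [AddTorsor V P] {s t : Set P}
    (hs : AffineIndependent k ((↑) : s → P)) (hts : t ⊆ s) (ht : t.Finite) :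
    ∃ f : P →ᵃ[k] k, (∀ x ∈ t, f x = 1) ∧ ∀ x ∈ s \ t, f x = 0 := by
  classical
  obtain ⟨u, hsu, hu, hspan⟩ := exists_subset_affineIndependent_affineSpan_eq_top hs
  let b : AffineBasis u k P := ⟨(↑), hu, by rwa [Subtype.range_coe]⟩
  let T : Finset u := ht.toFinset.subtype (· ∈ u)
  have hf : ∀ j : u, (∑ i ∈ T, b.coord i) j = if (j : P) ∈ t then 1 else 0 := fun j => by
    rw [show (∑ i ∈ T, b.coord i) j = ∑ i ∈ T, b.coord i (b j) from
      map_sum (AddMonoidHom.mk' (fun f : P →ᵃ[k] k => f j) fun _ _ => rfl) _ _]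
    simp only [b.coord_apply, Finset.sum_ite_eq', T, Finset.mem_subtype, Finite.mem_toFinset]
  exact ⟨∑ i ∈ T, b.coord i, fun x hx => (hf ⟨x, hsu (hts hx)⟩).trans (if_pos hx),
    fun x hx => (hf ⟨x, hsu hx.1⟩).trans (if_neg hx.2)⟩

section Simplex

variable {E : Type*} [NormedAddCommGroup E] [NormedSpace ℝ E] [FiniteDimensional ℝ E]
  {s t : Set E}

theorem AffineIndependent.isExposed_convexHull_of_subset
    (hs : AffineIndependent ℝ ((↑) : s → E)) (hts : t ⊆ s) :
    IsExposed ℝ (convexHull ℝ s) (convexHull ℝ t) := by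
  obtain ⟨f, hft, hfst⟩ := hs.exists_affineMap_eq_one_and_eq_zero hts
    ((finite_set_of_fin_dim_affineIndependent ℝ hs).subset hts)
  have hl : ∀ x, f.linear.toContinuousLinearMap x = f x - f 0 := fun x => by
    simp [AffineMap.decomp']
  rw [← union_sdiff_cancel hts]
  refine isExposed_convexHull_union f.linear.toContinuousLinearMap (c := 1 - f 0)
    (fun x hx => by rw [hl, hft x hx]) fun x hx => by rw [hl, hfst x hx]; linarith

theorem AffineIndependent.extremePoints_convexHull (hs : AffineIndependent ℝ ((↑) : s → E)) :
    extremePoints ℝ (convexHull ℝ s) = s := by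
  refine Subset.antisymm extremePoints_convexHull_subset fun x hx => ?_
  have := hs.isExposed_convexHull_of_subset (singleton_subset_iff.2 hx)
  rw [convexHull_singleton] at this
  exact this.isExtreme.mem_extremePoints

end Simplex

namespace IsPolytope

variable {d : ℕ} {F : Set (Euc d)}

theorem finite_vertSet (hF : IsPolytope F) : (vertSet F).Finite := by
  obtain ⟨A, hA, rfl⟩ := hF
  exact hA.subset extremePoints_convexHull_subset

theorem convexHull_vertSet (hF : IsPolytope F) : convexHull ℝ (vertSet F) = F := by
  have hcl : closure (convexHull ℝ (vertSet F)) = F := by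
    obtain ⟨A, hA, rfl⟩ := hF
    exact closure_convexHull_extremePoints (hA.isCompact_convexHull ℝ) (convex_convexHull ℝ A)
  rwa [(hF.finite_vertSet.isCompact_convexHull ℝ).isClosed.closure_eq] at hcl

theorem affineIndependent_vertSet (hF : IsPolytope F) (hdim : setDim F + 1 = (vertSet F).ncard) :
    AffineIndependent ℝ ((↑) : vertSet F → Euc d) := by
  have := hF.finite_vertSet.fintype
  have hdimF : setDim F = Module.finrank ℝ (vectorSpan ℝ (vertSet F)) := by
    conv_lhs => rw [← hF.convexHull_vertSet]
    rw [setDim, affineSpan_convexHull, direction_affineSpan]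
  rw [affineIndependent_iff_finrank_vectorSpan_eq ℝ _ (n := setDim F)
    (by rw [← Nat.card_eq_fintype_card, Nat.card_coe_set_eq, hdim]), Subtype.range_coe, hdimF]

end IsPolytope

namespace PolyComplex

variable {N : ℕ} (C : PolyComplex N)

theorem verts_finite : C.verts.Finite :=
  C.finite_faces.preimage singleton_injective.injOn

theorem exists_face_vertSet_eq_of_subset {F S : Set (Euc N)} (hF : F ∈ C.faces)
    (hdim : setDim F + 1 = (vertSet F).ncard) (hS : S ⊆ vertSet F) :
    ∃ G ∈ C.faces, vertSet G = S := by
  have hind := (C.polytope_mem F hF).affineIndependent_vertSet hdim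
  have hexp := hind.isExposed_convexHull_of_subset hS
  rw [(C.polytope_mem F hF).convexHull_vertSet] at hexp
  exact ⟨convexHull ℝ S, C.down_closed F hF _ hexp, (hind.mono hS).extremePoints_convexHull⟩

end PolyComplex

namespace PolyComplex.Bineighborly

variable {N k : ℕ} {C : PolyComplex N} {V1 : Set (Euc N)}

theorem exists_simplex_face_eq_union (hbn : C.Bineighborly V1 k) {S1 S2 : Set (Euc N)}
    (hS1 : S1.Nonempty) (hS2 : S2.Nonempty) (hS1V : S1 ⊆ V1) (hS2V : S2 ⊆ C.verts \ V1)
    (hk : S1.ncard + S2.ncard ≤ k) :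
    ∃ F ∈ C.faces, vertSet F = S1 ∪ S2 ∧ setDim F + 1 = (vertSet F).ncard := by
  obtain ⟨F, hF, hvF, hdim⟩ := hbn.2.2 S1 S2 hS1 hS2 hS1V hS2V hk
  have hdisj : Disjoint S1 S2 :=
    disjoint_left.2 fun x hx1 hx2 => (hS2V hx2).2 (hS1V hx1)
  refine ⟨F, hF, hvF, ?_⟩
  rw [hvF, ncard_union_eq hdisj (C.verts_finite.subset (hS1V.trans hbn.2.1.subset))
    (C.verts_finite.subset (hS2V.trans sdiff_subset)), hdim]

theorem exists_simplex_face_superset (hbn : C.Bineighborly V1 k) {S : Set (Euc N)}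
    (hS : S ⊆ C.verts) (hSne : S.Nonempty) (hSk : S.ncard < k) :
    ∃ F ∈ C.faces, S ⊆ vertSet F ∧ setDim F + 1 = (vertSet F).ncard := by
  by_cases hSV : (S ∩ V1).Nonempty
  · obtain ⟨w, hwC, hwV⟩ := exists_of_ssubset hbn.2.1
    have hcard := ncard_inter_add_ncard_sdiff_eq_ncard S V1 (C.verts_finite.subset hS)
    have hins := ncard_insert_le w (S \ V1)
    obtain ⟨F, hF, hvF, hdim⟩ := hbn.exists_simplex_face_eq_union hSV (insert_nonempty w _)
      inter_subset_right (insert_subset ⟨hwC, hwV⟩ fun x (hx : x ∈ S \ V1) => ⟨hS hx.1, hx.2⟩)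
      (by omega)
    refine ⟨F, hF, fun x hx => ?_, hdim⟩
    by_cases hxV : x ∈ V1
    exacts [hvF ▸ Or.inl ⟨hx, hxV⟩, hvF ▸ Or.inr (mem_insert_of_mem w ⟨hx, hxV⟩)]
  · obtain ⟨v, hv⟩ := hbn.1
    obtain ⟨F, hF, hvF, hdim⟩ := hbn.exists_simplex_face_eq_union (singleton_nonempty v) hSne
      (singleton_subset_iff.2 hv) (fun x hx => ⟨hS hx, fun hxV => hSV ⟨x, hx, hxV⟩⟩)
      (by rw [ncard_singleton]; omega)
    exact ⟨F, hF, hvF ▸ subset_union_right, hdim⟩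

end PolyComplex.Bineighborly

theorem statement_6_general (N k : ℕ) (hk : 2 ≤ k)
    (C : PolyComplex N)
    (V1 : Set (Euc N)) (hbn : C.Bineighborly V1 k) :
    C.Neighborly (k - 1) := by
  intro S hS hSne hSk
  obtain ⟨F, hF, hSF, hdim⟩ := hbn.exists_simplex_face_superset hS hSne (by omega)
  exact C.exists_face_vertSet_eq_of_subset hF hdim hSF

/-- a `(V1; k)`-bineighborly polytopal `d`-complex with `k ≥ 2` is
`(k-1)`-neighborly. -/
theorem statement_6 (N d k : ℕ) (hk : 2 ≤ k)
    (C : PolyComplex N) (hdc : C.IsDComplex d)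
    (V1 : Set (Euc N)) (hbn : C.Bineighborly V1 k) :
    C.Neighborly (k - 1) :=
  statement_6_general N k hk C V1 hbn
end
end

section
/- Fix integers k ≥ 2 and ℓ ≥ 2 with k+ℓ odd, and let 0 < x_1 < x_2 < … < x_k and 0 < y_1 < y_2 < … < y_ℓ be real numbers. For τ > 0 let D_{k,ℓ}(τ) be the (k+ℓ)×(k+ℓ) determinant whose first row is (1,…,1,0,…,0) (k ones followed by ℓ zeros), second row is (x_1τ,…,x_kτ,0,…,0), third row is (0,…,0,1,…,1) (k zeros followed by ℓ ones), fourth row is (0,…,0,y_1,…,y_ℓ), and whose (p+3)-rd row, for 2 ≤ p ≤ k+ℓ−3, is (x_1^p τ^p, …, x_k^p τ^p, y_1^p, …, y_ℓ^p). Then there exists τ_0 > 0 (depending on the x_i's, the y_j's, k, and ℓ) such that for all τ ∈ (0, τ_0), D_{k,ℓ}(τ) > 0. -/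
open Set Pointwise

noncomputable section

/-!
Expanding the determinant over permutations, `D(τ) = ∑_σ ± τ^{d(σ)} ∏_c D(1)_{σ c, c}`, where
`d(σ)` is the sum of the powers of `τ` in the rows that `σ` assigns to the `x`-columns. Those rows
carry pairwise distinct powers, so `d(σ) ≥ 0 + 1 + ⋯ + (k-1) =: m`, with equality exactly when the
`x`-columns use the rows of power `< k`. Hence `D(τ) = τ^m (c + O(τ))`, where `c` is the
determinant of the matrix with the higher powers in the `x`-columns deleted. An even permutation
of the rows makes that matrix block triangular, so `c = VD(x) · GVD(y; 0, 1, k, …, k+ℓ-3)`. Both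
factors are positive: a generalized Vandermonde determinant with increasing exponents never
vanishes (Rolle's theorem bounds the positive zeros of `∑ c_j u^{α_j}`), so deforming its exponents
to `0, 1, …, ℓ-1` does not change its sign.
-/

open Finset

theorem Finset.sum_range_id_add_card_sdiff_le (s : Finset ℕ) :
    ∑ i ∈ range #s, i + #(s \ range #s) ≤ ∑ i ∈ s, i := by
  set k := #s
  have hcard : #(range k \ s) = #(s \ range k) := card_sdiff_comm (by simp [k])
  have hlow : ∑ i ∈ range k \ s, (i + 1) ≤ #(range k \ s) * k :=
    sum_le_card_nsmul _ _ _ fun i hi => by rw [mem_sdiff, mem_range] at hi; omega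
  have hhigh : #(s \ range k) * k ≤ ∑ i ∈ s \ range k, i :=
    card_nsmul_le_sum _ _ _ fun i hi => by rw [mem_sdiff, mem_range] at hi; omega
  rw [sum_add_distrib, sum_const, smul_eq_mul, mul_one, hcard] at hlow
  rw [← sum_inter_add_sum_sdiff (range k) s, ← sum_inter_add_sum_sdiff s (range k), inter_comm]
  omega

theorem Fin.sum_range_add_card_le_sum_of_injective {k : ℕ} {w : Fin k → ℕ}
    (hw : Function.Injective w) : ∑ i ∈ range k, i + #{i | k ≤ w i} ≤ ∑ i, w i := by
  have himage : #(Finset.univ.image w) = k := by simp [card_image_of_injective _ hw]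
  have hout : Finset.univ.image w \ range k = (Finset.univ.filter (k ≤ w ·)).image w := by
    ext
    simp only [Finset.mem_sdiff, Finset.mem_image, Finset.mem_univ, true_and, Finset.mem_range,
      not_lt, Finset.mem_filter]
    grind
  have := (Finset.univ.image w).sum_range_id_add_card_sdiff_le
  rwa [himage, hout, card_image_of_injective _ hw, sum_image fun _ _ _ _ h => hw h] at this

theorem Fin.sum_eq_sum_range_of_injective {k : ℕ} {w : Fin k → ℕ} (hw : Function.Injective w)
    (hlt : ∀ i, w i < k) : ∑ i, w i = ∑ i ∈ range k, i := by
  have himage : Finset.univ.image w = range k :=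
    eq_of_subset_of_card_le (fun a ha => by obtain ⟨i, -, rfl⟩ := mem_image.1 ha; simp [hlt])
      (by simp [card_image_of_injective _ hw])
  rw [← himage, sum_image fun _ _ _ _ h => hw h]

theorem exists_pos_of_lowest_coeff_pos {ι : Type*} (s : Finset ι) (a : ι → ℝ) (d : ι → ℕ)
    (m : ℕ) (hd : ∀ i ∈ s, a i ≠ 0 → m ≤ d i) (hpos : 0 < ∑ i ∈ s with d i = m, a i) :
    ∃ τ0 > 0, ∀ τ : ℝ, 0 < τ → τ < τ0 → 0 < ∑ i ∈ s, a i * τ ^ d i := by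
  set g : ℝ → ℝ := fun τ => ∑ i ∈ s, a i * τ ^ (d i - m)
  have hfactor : ∀ τ, ∑ i ∈ s, a i * τ ^ d i = τ ^ m * g τ := fun τ => by
    rw [mul_sum]
    refine sum_congr rfl fun i hi => ?_
    by_cases ha : a i = 0
    · simp [ha]
    · rw [mul_left_comm, ← pow_add, Nat.add_sub_cancel' (hd i hi ha)]
  have hg0 : g 0 = ∑ i ∈ s with d i = m, a i := by
    rw [sum_filter]
    refine sum_congr rfl fun i hi => ?_
    by_cases ha : a i = 0
    · simp [ha]
    · have := hd i hi ha
      by_cases h : d i = m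
      · simp [h]
      · simp [h, show d i - m ≠ 0 by omega]
  obtain ⟨ε, hε, hball⟩ := Metric.eventually_nhds_iff.1 <|
    continuousAt_const.eventually_lt (by fun_prop : Continuous g).continuousAt
      (hg0 ▸ hpos : (0 : ℝ) < g 0)
  refine ⟨ε, hε, fun τ hτ hτε => ?_⟩
  rw [hfactor]
  exact mul_pos (pow_pos hτ m) (hball (by rwa [Real.dist_eq, sub_zero, abs_of_pos hτ]))

theorem Matrix.det_of_pow_mul {n R : Type*} [Fintype n] [DecidableEq n] [CommRing R]
    (A : Matrix n n R) (w : n → n → ℕ) (t : R) :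
    (Matrix.of fun i j => t ^ w i j * A i j).det
      = ∑ σ : Equiv.Perm n, (Equiv.Perm.sign σ • ∏ j, A (σ j) j) * t ^ ∑ j, w (σ j) j := by
  rw [Matrix.det_apply]
  refine sum_congr rfl fun σ _ => ?_
  simp only [Matrix.of_apply, prod_mul_distrib, prod_pow_eq_pow_sum]
  rw [smul_mul_assoc, mul_comm (∏ j, A (σ j) j)]

theorem eq_zero_of_sum_mul_rpow_eq_zero {ι : Type*} [DecidableEq ι] {α : ι → ℝ}
    (hα : Function.Injective α) :
    ∀ (n : ℕ) (S : Finset ι) (c : ι → ℝ), #S ≤ n → ∀ t : Fin n → ℝ, (∀ i, 0 < t i) →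
      StrictMono t → (∀ i, ∑ j ∈ S, c j * t i ^ α j = 0) → ∀ j ∈ S, c j = 0 := by
  intro n
  induction n generalizing α with
  | zero => intro S c hS _ _ _ _ j hj; simp_all
  | succ n ih =>
    intro S c hS t ht0 ht hzero
    obtain rfl | ⟨j₀, hj₀⟩ := S.eq_empty_or_nonempty
    · simp
    -- `g = u ^ (-α j₀) * ∑ j ∈ S, c j * u ^ α j` vanishes at the `t i`, so by Rolle's theorem
    -- `g'`, a sum of the same shape without the `j₀` term, vanishes at `n` points between them.
    set g : ℝ → ℝ := fun u => ∑ j ∈ S, c j * u ^ (α j - α j₀)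
    set g' : ℝ → ℝ := fun u => ∑ j ∈ S, c j * ((α j - α j₀) * u ^ (α j - α j₀ - 1))
    have hg : ∀ i, g (t i) = 0 := fun i => by
      simp only [g, Real.rpow_sub (ht0 i), mul_div_assoc', ← sum_div, hzero i, zero_div]
    have hderiv : ∀ u > 0, HasDerivAt g (g' u) u := fun u hu =>
      HasDerivAt.fun_sum fun j _ =>
        (Real.hasDerivAt_rpow_const (Or.inl hu.ne')).const_mul (c j)
    have hrolle : ∀ i : Fin n, ∃ u ∈ Set.Ioo (t i.castSucc) (t i.succ), g' u = 0 := fun i =>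
      exists_hasDerivAt_eq_zero (ht Fin.castSucc_lt_succ)
        (fun u hu => (hderiv u ((ht0 _).trans_le hu.1)).continuousAt.continuousWithinAt)
        (by rw [hg, hg]) fun u hu => hderiv u ((ht0 _).trans hu.1)
    choose u hu hu' using hrolle
    have hmono : StrictMono u := fun i j hij =>
      calc u i < t i.succ := (hu i).2
        _ ≤ t j.castSucc := ht.monotone (Fin.succ_le_castSucc_iff.2 hij)
        _ < u j := (hu j).1
    have hα' : Function.Injective fun j => α j - α j₀ - 1 := fun a b h =>
      hα (by simpa using h)
    have herase := ih hα' (S.erase j₀) (fun j => c j * (α j - α j₀))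
      (by rw [card_erase_of_mem hj₀]; omega) u (fun i => (ht0 _).trans (hu i).1) hmono
      fun i => by
        rw [← hu' i]
        simp only [g']
        rw [← sum_erase S (a := j₀) (by simp)]
        exact sum_congr rfl fun j _ => by ring
    have hne : ∀ j ∈ S.erase j₀, c j = 0 := fun j hj =>
      (mul_eq_zero.1 (herase j hj)).resolve_right
        (sub_ne_zero.2 fun h => (ne_of_mem_erase hj) (hα h))
    intro j hj
    by_cases hjj : j = j₀
    · subst hjj
      have h0 := hzero 0
      rw [← add_sum_erase _ _ hj, sum_eq_zero fun i hi => by rw [hne i hi, zero_mul],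
        add_zero] at h0
      exact (mul_eq_zero.1 h0).resolve_right (Real.rpow_pos_of_pos (ht0 0) _).ne'
    · exact hne j (mem_erase.2 ⟨hjj, hj⟩)

theorem Matrix.det_vandermonde_pos {n : ℕ} {y : Fin n → ℝ} (hy : StrictMono y) :
    0 < (Matrix.vandermonde y).det := by
  rw [Matrix.det_vandermonde]
  exact prod_pos fun i _ => prod_pos fun j hj => sub_pos.2 (hy (mem_Ioi.1 hj))

theorem Matrix.det_rpow_ne_zero {n : ℕ} {α : Fin n → ℝ} (hα : Function.Injective α)
    {y : Fin n → ℝ} (hy0 : ∀ j, 0 < y j) (hy : StrictMono y) :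
    (Matrix.of fun i j => y j ^ α i).det ≠ 0 := by
  intro h
  obtain ⟨v, hv, hvM⟩ := Matrix.exists_vecMul_eq_zero_iff.2 h
  refine hv (funext fun i => eq_zero_of_sum_mul_rpow_eq_zero hα n univ v (by simp) y hy0 hy
    (fun j => ?_) i (mem_univ i))
  simpa [Matrix.vecMul, dotProduct] using congrFun hvM j

theorem Matrix.det_rpow_pos {n : ℕ} {α : Fin n → ℝ} (hα : StrictMono α)
    {y : Fin n → ℝ} (hy0 : ∀ j, 0 < y j) (hy : StrictMono y) :
    0 < (Matrix.of fun i j => y j ^ α i).det := by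
  set F : ℝ → ℝ := fun s => (Matrix.of fun i j : Fin n => y j ^ ((1 - s) * α i + s * i)).det
  have hF : ∀ s ∈ Set.Icc (0 : ℝ) 1, F s ≠ 0 := by
    intro s ⟨hs0, hs1⟩
    refine Matrix.det_rpow_ne_zero (StrictMono.injective fun a b hab => ?_) hy0 hy
    have := hα hab
    have : (a : ℝ) < b := by exact_mod_cast hab
    rcases hs0.eq_or_lt with rfl | hs0
    · simpa
    · nlinarith
  have hcont : Continuous F := by
    refine Continuous.matrix_det (continuous_matrix fun i j => ?_)
    exact continuous_const.rpow (by fun_prop) fun _ => Or.inl (hy0 j).ne'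
  have hF1 : 0 < F 1 := by
    have : (Matrix.of fun i j : Fin n => y j ^ ((1 - 1 : ℝ) * α i + 1 * i)) =
        Matrix.transpose (Matrix.vandermonde y) := by
      ext i j; simp
    simpa only [F, this, Matrix.det_transpose] using Matrix.det_vandermonde_pos hy
  have hF0 : F 0 = (Matrix.of fun i j => y j ^ α i).det := by simp [F]
  rw [← hF0]
  by_contra! hneg
  obtain ⟨s, hs, hFs⟩ := intermediate_value_Icc zero_le_one hcont.continuousOn ⟨hneg, hF1.le⟩
  exact hF s hs hFs

theorem GVDdet_pos {k l : ℕ} (hk : 2 ≤ k) {y : Fin l → ℝ} (hy0 : ∀ j, 0 < y j)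
    (hy : StrictMono y) : 0 < GVDdet k y := by
  have hμ : StrictMono fun i : Fin l => (muExp k i : ℝ) := fun i j hij => by
    have : (i : ℕ) < j := hij
    simp only [muExp, Nat.cast_lt]
    split_ifs <;> omega
  simpa [GVDdet, Real.rpow_natCast] using Matrix.det_rpow_pos hμ hy0 hy

theorem Fin.val_cycleIcc {n : ℕ} {a b : Fin n} (hab : a ≤ b) (r : Fin n) :
    (Fin.cycleIcc a b r : ℕ) =
      if (a : ℕ) ≤ r ∧ (r : ℕ) < b then (r : ℕ) + 1 else if (r : ℕ) = b then (a : ℕ) else r := by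
  have : NeZero n := ⟨by have := r.isLt; omega⟩
  have hab' := Fin.le_iff_val_le_val.1 hab
  rcases lt_or_ge r a with hra | har
  · rw [Fin.cycleIcc_of_lt hra, if_neg (by omega), if_neg (by omega)]
  rcases lt_or_ge b r with hbr | hrb
  · rw [Fin.cycleIcc_of_gt hbr, if_neg (by omega), if_neg (by omega)]
  have hrb' := Fin.le_iff_val_le_val.1 hrb
  rw [Fin.cycleIcc_of_le_of_le har hrb]
  by_cases h : (r : ℕ) = b
  · simp [Fin.ext h]
  · rw [if_neg (Fin.val_ne_iff.1 h), if_pos ⟨har, by omega⟩, Fin.val_add, Fin.val_one',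
      Nat.add_mod_mod, Nat.mod_eq_of_lt (by omega)]

/-- The power of the variable in row `r` of `Dmat` (rows `2` and `3` carry the powers `0` and `1`
of the `y`'s). -/
def rowExp (r : ℕ) : ℕ := if r ≤ 1 then r else r - 2

namespace Dmat

variable {k l : ℕ} (x : Fin k → ℝ) (y : Fin l → ℝ)

theorem apply_castAdd (τ : ℝ) (r : Fin (k + l)) (i : Fin k) :
    Dmat k l x y τ r (Fin.castAdd l i) =
      if (r : ℕ) = 2 ∨ (r : ℕ) = 3 then 0 else (x i * τ) ^ rowExp r := by
  have := r.isLt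
  simp only [Dmat, Matrix.of_apply, Fin.val_castAdd, i.isLt, dite_true, rowExp]
  split_ifs <;> simp_all
  omega

theorem apply_natAdd (τ : ℝ) (r : Fin (k + l)) (j : Fin l) :
    Dmat k l x y τ r (Fin.natAdd k j) = if (r : ℕ) ≤ 1 then 0 else y j ^ rowExp r := by
  have := r.isLt
  simp only [Dmat, Matrix.of_apply, Fin.val_natAdd, add_tsub_cancel_left, rowExp]
  split_ifs <;> simp_all <;> omega

theorem eq_pow_mul_Dmat_one (τ : ℝ) :
    Dmat k l x y τ = Matrix.of fun r c : Fin (k + l) =>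
      τ ^ (if (c : ℕ) < k then rowExp r else 0) * Dmat k l x y 1 r c := by
  ext r c
  induction c using Fin.addCases with
  | left i =>
    simp only [Matrix.of_apply, apply_castAdd, Fin.val_castAdd, i.isLt, if_true, mul_one]
    split_ifs <;> ring
  | right j => simp [apply_natAdd]

theorem det_eq_sum (τ : ℝ) :
    (Dmat k l x y τ).det = ∑ σ : Equiv.Perm (Fin (k + l)),
      (Equiv.Perm.sign σ • ∏ c, Dmat k l x y 1 (σ c) c) *
        τ ^ ∑ i : Fin k, rowExp (σ (Fin.castAdd l i)) := by
  rw [eq_pow_mul_Dmat_one, Matrix.det_of_pow_mul]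
  simp [Fin.sum_univ_add]

theorem injective_rowExp_of_prod_ne_zero {σ : Equiv.Perm (Fin (k + l))}
    (hσ : ∏ c, Dmat k l x y 1 (σ c) c ≠ 0) :
    Function.Injective fun i : Fin k => rowExp (σ (Fin.castAdd l i)) := by
  have hrow : ∀ i, (σ (Fin.castAdd l i) : ℕ) ≠ 2 ∧ (σ (Fin.castAdd l i) : ℕ) ≠ 3 := fun i => by
    have := prod_ne_zero_iff.1 hσ (Fin.castAdd l i) (mem_univ _)
    rw [apply_castAdd] at this
    split_ifs at this with h
    exacts [absurd rfl this, by omega]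
  intro i j hij
  have hi := hrow i
  have hj := hrow j
  simp only [rowExp] at hij
  exact Fin.castAdd_injective _ _ (σ.injective (Fin.ext (by split_ifs at hij <;> omega)))

theorem sum_range_le_sum_rowExp {σ : Equiv.Perm (Fin (k + l))}
    (hσ : ∏ c, Dmat k l x y 1 (σ c) c ≠ 0) :
    ∑ i ∈ range k, i ≤ ∑ i : Fin k, rowExp (σ (Fin.castAdd l i)) := by
  have := Fin.sum_range_add_card_le_sum_of_injective (injective_rowExp_of_prod_ne_zero x y hσ)
  omega

def trunc (k l : ℕ) (x : Fin k → ℝ) (y : Fin l → ℝ) : Matrix (Fin (k + l)) (Fin (k + l)) ℝ :=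
  Matrix.of fun r c => if (c : ℕ) < k ∧ k ≤ rowExp r then 0 else Dmat k l x y 1 r c

theorem trunc_apply (r c : Fin (k + l)) :
    trunc k l x y r c = if (c : ℕ) < k ∧ k ≤ rowExp r then 0 else Dmat k l x y 1 r c :=
  rfl

theorem sum_lowest_eq_det_trunc :
    ∑ σ : Equiv.Perm (Fin (k + l)) with
        ∑ i : Fin k, rowExp (σ (Fin.castAdd l i)) = ∑ i ∈ range k, i,
      Equiv.Perm.sign σ • ∏ c, Dmat k l x y 1 (σ c) c = (trunc k l x y).det := by
  rw [Matrix.det_apply, sum_filter]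
  refine sum_congr rfl fun σ _ => ?_
  by_cases hσ : ∏ c, Dmat k l x y 1 (σ c) c = 0
  · obtain ⟨c, -, hc⟩ := prod_eq_zero_iff.1 hσ
    rw [hσ, prod_eq_zero (f := fun c => trunc k l x y (σ c) c) (mem_univ c)
      (by simp [trunc_apply, hc]), smul_zero, ite_self]
  have hw := injective_rowExp_of_prod_ne_zero x y hσ
  by_cases hlt : ∀ i : Fin k, rowExp (σ (Fin.castAdd l i)) < k
  · rw [if_pos (Fin.sum_eq_sum_range_of_injective hw hlt), Fin.prod_univ_add, Fin.prod_univ_add]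
    simp [trunc_apply, fun i => not_le.2 (hlt i)]
  · obtain ⟨i, hi⟩ := not_forall.1 hlt
    rw [prod_eq_zero (f := fun c => trunc k l x y (σ c) c) (mem_univ (Fin.castAdd l i))
        (by simp [trunc_apply, not_lt.1 hi]), smul_zero, if_neg]
    have := Fin.sum_range_add_card_le_sum_of_injective hw
    have : 0 < #{i : Fin k | k ≤ rowExp (σ (Fin.castAdd l i))} :=
      card_pos.2 ⟨i, by simpa using hi⟩
    omega

/-- Rotating rows `2, …, k+1` of `trunc` by two places makes it block upper triangular with
diagonal blocks `VD(x)ᵀ` and `GVD(y)`; being a square, the rotation is even. -/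
def rowPerm (k l : ℕ) (hk : 2 ≤ k) (hl : 2 ≤ l) : Equiv.Perm (Fin (k + l)) :=
  Fin.cycleIcc (⟨2, by omega⟩ : Fin (k + l)) ⟨k + 1, by omega⟩ ^ 2

variable {x y}

theorem sign_rowPerm (hk : 2 ≤ k) (hl : 2 ≤ l) : Equiv.Perm.sign (rowPerm k l hk hl) = 1 := by
  rw [rowPerm, map_pow, Int.units_sq]

theorem val_rowPerm (hk : 2 ≤ k) (hl : 2 ≤ l) (r : Fin (k + l)) :
    (rowPerm k l hk hl r : ℕ) =
      if (r : ℕ) ≤ 1 then (r : ℕ) else if (r : ℕ) < k then (r : ℕ) + 2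
      else if (r : ℕ) ≤ k + 1 then (r : ℕ) - k + 2 else (r : ℕ) := by
  have hab : (⟨2, by omega⟩ : Fin (k + l)) ≤ ⟨k + 1, by omega⟩ := Fin.mk_le_mk.2 (by omega)
  rw [rowPerm, sq, Equiv.Perm.mul_apply, Fin.val_cycleIcc hab, Fin.val_cycleIcc hab]
  dsimp only
  split_ifs <;> omega

theorem det_trunc (hk : 2 ≤ k) (hl : 2 ≤ l) :
    (trunc k l x y).det = (Matrix.vandermonde x).det * GVDdet k y := by
  set N := (trunc k l x y).submatrix (fun s => rowPerm k l hk hl (finSumFinEquiv s))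
    finSumFinEquiv
  have h11 : N.toBlocks₁₁ = Matrix.transpose (Matrix.vandermonde x) := by
    ext i j
    have := val_rowPerm hk hl (Fin.castAdd l i)
    simp only [N, Matrix.toBlocks₁₁, Matrix.of_apply, Matrix.submatrix_apply,
      finSumFinEquiv_apply_left, trunc_apply, apply_castAdd, Fin.val_castAdd,
      Matrix.transpose_apply, Matrix.vandermonde_apply, mul_one, rowExp] at this ⊢
    split_ifs at this ⊢ <;> first | omega | congr 1 <;> omega
  have h21 : N.toBlocks₂₁ = 0 := by
    ext i j
    have := val_rowPerm hk hl (Fin.natAdd k i)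
    simp only [N, Matrix.toBlocks₂₁, Matrix.of_apply, Matrix.submatrix_apply,
      finSumFinEquiv_apply_left, finSumFinEquiv_apply_right, trunc_apply,
      apply_castAdd, Fin.val_castAdd, Fin.val_natAdd, Matrix.zero_apply, rowExp] at this ⊢
    split_ifs at this ⊢ <;> first | rfl | omega
  have h22 : N.toBlocks₂₂ = Matrix.of fun i j : Fin l => y j ^ muExp k i := by
    ext i j
    have := val_rowPerm hk hl (Fin.natAdd k i)
    simp only [N, Matrix.toBlocks₂₂, Matrix.of_apply, Matrix.submatrix_apply,
      finSumFinEquiv_apply_right, trunc_apply, apply_natAdd, Fin.val_natAdd,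
      rowExp, muExp] at this ⊢
    split_ifs at this ⊢ <;> first | omega | congr 1; omega
  calc (trunc k l x y).det
      = ((trunc k l x y).submatrix (rowPerm k l hk hl) id).det := by
        rw [Matrix.det_permute, sign_rowPerm, Units.val_one, Int.cast_one, one_mul]
    _ = N.det := (Matrix.det_submatrix_equiv_self finSumFinEquiv _).symm
    _ = _ := by
      rw [← Matrix.fromBlocks_toBlocks N, h11, h21, h22, Matrix.det_fromBlocks_zero₂₁,
        Matrix.det_transpose, GVDdet]

end Dmat

theorem statement_16_general (k l : ℕ) (hk : 2 ≤ k) (hl : 2 ≤ l)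
    (x : Fin k → ℝ) (y : Fin l → ℝ)
    (hx : StrictMono x)
    (hy0 : ∀ j, 0 < y j) (hy : StrictMono y) :
    ∃ τ0 : ℝ, 0 < τ0 ∧ ∀ τ : ℝ, 0 < τ → τ < τ0 → 0 < (Dmat k l x y τ).det := by
  obtain ⟨τ0, hτ0, hpos⟩ := exists_pos_of_lowest_coeff_pos univ
    (fun σ => Equiv.Perm.sign σ • ∏ c, Dmat k l x y 1 (σ c) c)
    (fun σ => ∑ i : Fin k, rowExp (σ (Fin.castAdd l i))) (∑ i ∈ range k, i)
    (fun σ _ hσ => Dmat.sum_range_le_sum_rowExp x y fun h => hσ (by rw [h, smul_zero]))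
    (by
      rw [Dmat.sum_lowest_eq_det_trunc, Dmat.det_trunc hk hl]
      exact mul_pos (Matrix.det_vandermonde_pos hx) (GVDdet_pos hk hy0 hy))
  exact ⟨τ0, hτ0, fun τ hτ hττ0 => Dmat.det_eq_sum x y τ ▸ hpos τ hτ hττ0⟩

/-- for `k, ℓ ≥ 2` with `k + ℓ` odd and increasing positive `x_i`, `y_j`,
the determinant `D_{k,ℓ}(τ)` is strictly positive for all sufficiently small `τ > 0`. -/
theorem statement_16 (k l : ℕ) (hk : 2 ≤ k) (hl : 2 ≤ l) (hodd : Odd (k + l))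
    (x : Fin k → ℝ) (y : Fin l → ℝ)
    (hx0 : ∀ i, 0 < x i) (hx : StrictMono x)
    (hy0 : ∀ j, 0 < y j) (hy : StrictMono y) :
    ∃ τ0 : ℝ, 0 < τ0 ∧ ∀ τ : ℝ, 0 < τ → τ < τ0 → 0 < (Dmat k l x y τ).det :=
  statement_16_general k l hk hl x y hx hy0 hy
end
end
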